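/- Let M ∈ ℤ^{m×n} and b, b' ∈ ℤᵐ with b' = b − eⁱ for some index i, where eⁱ is the i-th standard unit vector. Suppose P = {x : Mx ≤ b} is a nonempty integral polyhedron and the constraint rowᵢ(M)x ≤ bᵢ is irredundant for P. If F' is a minimal nonempty face of P' = {x : Mx ≤ b'} that is not a face of P, then there exists a minimal nonempty face F of P whose set of tight constraint indices in Mx ≤ b equals the set of tight constraint indices of F' in Mx ≤ b', provided Mx ≤ b is non-degenerate. -/

import Mathlib

/-- `F` is a face of `S`: the set of maximizers of some linear functional over `S`. -/
def IsFaceOf {n : ℕ} (S F : Set (Fin n → ℝ)) : Prop :=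
  ∃ c : Fin n → ℝ, F = {x ∈ S | ∀ y ∈ S, ∑ j, c j * y j ≤ ∑ j, c j * x j}

/-- `F` is a minimal nonempty face of `S`. -/
def IsMinimalFaceOf {n : ℕ} (S F : Set (Fin n → ℝ)) : Prop :=
  IsFaceOf S F ∧ F.Nonempty ∧
    ∀ G, IsFaceOf S G → G.Nonempty → G ⊆ F → G = F

/-- Index set of constraints of `Mx ≤ b` tight on all of `F`. -/
def TightIdx {m n : ℕ} (M : Matrix (Fin m) (Fin n) ℤ) (b : Fin m → ℤ)
    (F : Set (Fin n → ℝ)) : Set (Fin m) :=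
  {i | ∀ x ∈ F, ∑ j, (M i j : ℝ) * x j = (b i : ℝ)}

/-- Every minimal nonempty face contains an integer point. -/
def IsIntegralPoly {n : ℕ} (S : Set (Fin n → ℝ)) : Prop :=
  ∀ F, IsMinimalFaceOf S F → ∃ x ∈ F, ∀ j, ∃ z : ℤ, x j = (z : ℝ)

/-- Non-degeneracy of `Mx ≤ b`: for every minimal nonempty proper face `F`, the
left-hand sides of the tight constraints are linearly independent, where among a
pair of tight constraints `αᵀx ≤ β`, `−αᵀx ≤ −β` only one is counted. -/
def NonDegenerate {m n : ℕ} (M : Matrix (Fin m) (Fin n) ℤ) (b : Fin m → ℤ)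
    (P : Set (Fin n → ℝ)) : Prop :=
  ∀ F, IsMinimalFaceOf P F → F ≠ P →
    ∃ J : Set (Fin m), J ⊆ TightIdx M b F ∧
      (∀ i ∈ TightIdx M b F, ∃ j ∈ J,
        ((∀ k, M i k = M j k) ∧ b i = b j) ∨
        ((∀ k, M i k = -(M j k)) ∧ b i = -(b j))) ∧
      LinearIndependent ℝ (fun j : J => fun k => (M j k : ℝ))

/-! Let `I` be the tight set of `F'` in `Mx ≤ b'`. As `F'` is a minimal face it is the affine
space `{x | M_I x = b'_I}`, so the rows of `I` span all rows. Since `F'` is not a face of `P`,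
`i ∈ I` and row `i` is not implied by the other equations of `I`: some direction `d` raises
row `i` by one and fixes the rest of `I`, and the candidate mate is `{x | M_I x = b_I} = F' + d`.
If it left `P`, moving from `F'` along `d` would meet a first new constraint after a fraction
`τ ∈ (0, 1)` of `d`, producing a minimal face of `P` on which row `i` takes the non-integral
value `b_i - 1 + τ`. So it is a minimal face of `P` whose tight set contains `I`; any further
tight constraint would, by non-degeneracy, bring a row independent of those of `I`, which is
impossible. Irredundancy of row `i` makes a pair of sign-duplicated constraints either both
lie in `I` or both lie outside it. -/

open Matrix Filter Topology

section Polyhedron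

variable {ι : Type*} {n : ℕ}

theorem isFaceOf_iff {S F : Set (Fin n → ℝ)} :
    IsFaceOf S F ↔ ∃ u : Fin n → ℝ, F = {x ∈ S | ∀ y ∈ S, u ⬝ᵥ y ≤ u ⬝ᵥ x} :=
  Iff.rfl

theorem IsFaceOf.subset {S F : Set (Fin n → ℝ)} (hF : IsFaceOf S F) : F ⊆ S := by
  obtain ⟨u, rfl⟩ := hF
  exact fun x hx => hx.1

theorem IsFaceOf.convex {S F : Set (Fin n → ℝ)} (hS : Convex ℝ S) (hF : IsFaceOf S F) :
    Convex ℝ F := by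
  obtain ⟨u, rfl⟩ := isFaceOf_iff.1 hF
  intro x hx y hy s t hs ht hst
  refine ⟨hS hx.1 hy.1 hs ht hst, fun z hz => ?_⟩
  rw [dotProduct_add, dotProduct_smul, dotProduct_smul, smul_eq_mul, smul_eq_mul,
    ← one_mul (u ⬝ᵥ z), ← hst, add_mul]
  exact add_le_add (mul_le_mul_of_nonneg_left (hx.2 z hz) hs)
    (mul_le_mul_of_nonneg_left (hy.2 z hz) ht)

def polyhedron (a : ι → Fin n → ℝ) (c : ι → ℝ) : Set (Fin n → ℝ) :=
  {x | ∀ k, a k ⬝ᵥ x ≤ c k}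

def tightSet (a : ι → Fin n → ℝ) (c : ι → ℝ) (F : Set (Fin n → ℝ)) : Set ι :=
  {k | ∀ x ∈ F, a k ⬝ᵥ x = c k}

def equalitySet (a : ι → Fin n → ℝ) (c : ι → ℝ) (W : Set ι) : Set (Fin n → ℝ) :=
  {x | ∀ k ∈ W, a k ⬝ᵥ x = c k}

/-- The rows indexed by `W` span all rows, phrased through kernels (the two readings agree by
`mem_span_of_forall_dotProduct_eq_zero`). -/
def SpansAllRows (a : ι → Fin n → ℝ) (W : Set ι) : Prop :=
  ∀ e, (∀ l ∈ W, a l ⬝ᵥ e = 0) → ∀ k, a k ⬝ᵥ e = 0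

variable {a : ι → Fin n → ℝ} {c : ι → ℝ}

theorem convex_polyhedron : Convex ℝ (polyhedron a c) := by
  intro x hx y hy s t hs ht hst k
  rw [dotProduct_add, dotProduct_smul, dotProduct_smul, smul_eq_mul, smul_eq_mul, ← one_mul (c k),
    ← hst, add_mul]
  exact add_le_add (mul_le_mul_of_nonneg_left (hx k) hs) (mul_le_mul_of_nonneg_left (hy k) ht)

theorem polyhedron_mono {c' : ι → ℝ} (h : c' ≤ c) : polyhedron a c' ⊆ polyhedron a c :=
  fun _ hx k => (hx k).trans (h k)

theorem subset_tightSet_equalitySet (W : Set ι) : W ⊆ tightSet a c (equalitySet a c W) :=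
  fun _ hk _ hx => hx _ hk

theorem subset_equalitySet_tightSet (F : Set (Fin n → ℝ)) :
    F ⊆ equalitySet a c (tightSet a c F) :=
  fun x hx _ hk => hk x hx

theorem add_smul_sub_mem_equalitySet {W : Set ι} {x z : Fin n → ℝ}
    (hx : x ∈ equalitySet a c W) (hz : z ∈ equalitySet a c W) (t : ℝ) :
    x + t • (z - x) ∈ equalitySet a c W := fun k hk => by
  rw [dotProduct_add, dotProduct_smul, dotProduct_sub, hx k hk, hz k hk, sub_self, smul_zero,
    add_zero]

theorem SpansAllRows.dotProduct_eq {W : Set ι} (h : SpansAllRows a W) {x y : Fin n → ℝ}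
    (hx : x ∈ equalitySet a c W) (hy : y ∈ equalitySet a c W) (k : ι) :
    a k ⬝ᵥ x = a k ⬝ᵥ y := by
  have := h (x - y) (fun l hl => by rw [dotProduct_sub, hx l hl, hy l hl, sub_self]) k
  rwa [dotProduct_sub, sub_eq_zero] at this

theorem SpansAllRows.equalitySet_subset {W : Set ι} (h : SpansAllRows a W) {x₀ : Fin n → ℝ}
    (hx₀ : x₀ ∈ equalitySet a c W) (hx₀P : x₀ ∈ polyhedron a c) :
    equalitySet a c W ⊆ polyhedron a c := fun _ hx k =>
  (h.dotProduct_eq hx hx₀ k).trans_le (hx₀P k)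

theorem SpansAllRows.insert_diff_singleton {I : Set ι} {i k : ι} {d : Fin n → ℝ}
    (hI : SpansAllRows a I) (hd1 : a i ⬝ᵥ d = 1) (hd0 : ∀ l ∈ I, l ≠ i → a l ⬝ᵥ d = 0)
    (hk : a k ⬝ᵥ d ≠ 0) : SpansAllRows a (insert k (I \ {i})) := by
  intro e he
  have hker := hI (e - (a i ⬝ᵥ e) • d) fun l hl => by
    rcases eq_or_ne l i with rfl | hli
    · rw [dotProduct_sub, dotProduct_smul, hd1, smul_eq_mul, mul_one, sub_self]
    · rw [dotProduct_sub, dotProduct_smul, hd0 l hl hli, smul_zero, sub_zero,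
        he l (Set.mem_insert_of_mem k ⟨hl, hli⟩)]
  have hie : a i ⬝ᵥ e = 0 := by
    have := hker k
    rw [dotProduct_sub, dotProduct_smul, he k (Set.mem_insert k _), smul_eq_mul, zero_sub,
      neg_eq_zero] at this
    exact (mul_eq_zero.1 this).resolve_right hk
  intro l
  simpa [hie] using hker l

theorem eq_of_irredundant {i s : ι} (hirr : ∃ x, (∀ k, k ≠ i → a k ⬝ᵥ x ≤ c k) ∧ c i < a i ⬝ᵥ x)
    (ha : a s = a i) (hc : c s = c i) : s = i := by
  by_contra hs
  obtain ⟨x, hx, hxi⟩ := hirr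
  have := hx s hs
  rw [ha, hc] at this
  exact this.not_gt hxi

theorem mem_span_of_forall_dotProduct_eq_zero {κ : Type*} (v : κ → Fin n → ℝ)
    (w : Fin n → ℝ) (h : ∀ e, (∀ k, v k ⬝ᵥ e = 0) → w ⬝ᵥ e = 0) :
    w ∈ Submodule.span ℝ (Set.range v) := by
  set φ := dotProductEquiv ℝ (Fin n)
  have hφ : φ w ∈ Submodule.span ℝ (Set.range (φ ∘ v)) :=
    FiniteDimensional.mem_span_of_iInf_ker_le_ker fun e he =>
      h e fun k => (Submodule.mem_iInf _).1 he k
  rwa [Set.range_comp, Submodule.span_image_linearEquiv, Submodule.mem_map_equiv,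
    LinearEquiv.symm_apply_apply] at hφ

end Polyhedron

section Faces

variable {ι : Type*} {n : ℕ} {a : ι → Fin n → ℝ} {c : ι → ℝ} {F : Set (Fin n → ℝ)}

theorem Convex.exists_forall_dotProduct_lt (hF : Convex ℝ F) (hne : F.Nonempty) (s : Finset ι)
    (hle : ∀ k ∈ s, ∀ x ∈ F, a k ⬝ᵥ x ≤ c k) (hlt : ∀ k ∈ s, ∃ y ∈ F, a k ⬝ᵥ y < c k) :
    ∃ w ∈ F, ∀ k ∈ s, a k ⬝ᵥ w < c k := by
  classical
  induction s using Finset.induction_on with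
  | empty => obtain ⟨w, hw⟩ := hne; exact ⟨w, hw, by simp⟩
  | insert k s _ ih =>
    obtain ⟨w, hwF, hw⟩ := ih (fun l hl => hle l (Finset.mem_insert_of_mem hl))
      (fun l hl => hlt l (Finset.mem_insert_of_mem hl))
    obtain ⟨y, hyF, hy⟩ := hlt k (Finset.mem_insert_self k s)
    refine ⟨(1 / 2 : ℝ) • w + (1 / 2 : ℝ) • y, hF hwF hyF (by norm_num) (by norm_num) (by norm_num),
      fun l hl => ?_⟩
    rw [dotProduct_add, dotProduct_smul, dotProduct_smul, smul_eq_mul, smul_eq_mul]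
    rcases Finset.mem_insert.1 hl with rfl | hl
    · linarith [hle l (Finset.mem_insert_self l s) w hwF]
    · linarith [hw l hl, hle l (Finset.mem_insert_of_mem hl) y hyF]

theorem IsFaceOf.exists_forall_lt_of_notMem_tightSet [Fintype ι]
    (hF : IsFaceOf (polyhedron a c) F) (hne : F.Nonempty) :
    ∃ w ∈ F, ∀ k ∉ tightSet a c F, a k ⬝ᵥ w < c k := by
  classical
  obtain ⟨w, hwF, hw⟩ := (hF.convex convex_polyhedron).exists_forall_dotProduct_lt hne
    (Finset.univ.filter fun k => k ∉ tightSet a c F) (fun k _ x hx => hF.subset hx k)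
    fun k hk => by
      obtain ⟨y, hyF, hy⟩ := not_forall₂.1 (Finset.mem_filter.1 hk).2
      exact ⟨y, hyF, (hF.subset hyF k).lt_of_ne hy⟩
  exact ⟨w, hwF, fun k hk => hw k (Finset.mem_filter.2 ⟨Finset.mem_univ k, hk⟩)⟩

theorem isFaceOf_inter_equalitySet [Fintype ι] {W : Set ι} {x₀ : Fin n → ℝ}
    (hx₀ : x₀ ∈ polyhedron a c ∩ equalitySet a c W) :
    IsFaceOf (polyhedron a c) (polyhedron a c ∩ equalitySet a c W) := by
  classical
  set s : Finset ι := Finset.univ.filter (· ∈ W)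
  have hle : ∀ x ∈ polyhedron a c, (∑ k ∈ s, a k) ⬝ᵥ x ≤ ∑ k ∈ s, c k := fun x hx => by
    rw [sum_dotProduct]
    exact Finset.sum_le_sum fun k _ => hx k
  have heq : ∀ x ∈ polyhedron a c,
      (∑ k ∈ s, a k) ⬝ᵥ x = ∑ k ∈ s, c k ↔ x ∈ equalitySet a c W := fun x hx => by
    rw [sum_dotProduct, Finset.sum_eq_sum_iff_of_le fun k _ => hx k]
    simp [s, equalitySet]
  refine isFaceOf_iff.2 ⟨∑ k ∈ s, a k, Set.ext fun x =>
    ⟨fun ⟨hxP, hxW⟩ => ⟨hxP, fun y hy => ?_⟩, fun ⟨hxP, hmax⟩ => ⟨hxP, ?_⟩⟩⟩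
  · rw [(heq x hxP).2 hxW]
    exact hle y hy
  · refine (heq x hxP).1 ((hle x hxP).antisymm ?_)
    rw [← (heq x₀ hx₀.1).2 hx₀.2]
    exact hmax x₀ hx₀.1

theorem eventually_add_smul_mem_polyhedron [Finite ι] {w v : Fin n → ℝ}
    (hw : w ∈ polyhedron a c) (hv : ∀ k, a k ⬝ᵥ w = c k → a k ⬝ᵥ v = 0) :
    ∀ᶠ t in 𝓝 (0 : ℝ), w + t • v ∈ polyhedron a c := by
  show ∀ᶠ t in 𝓝 (0 : ℝ), ∀ k, a k ⬝ᵥ (w + t • v) ≤ c k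
  refine Filter.eventually_all.2 fun k => ?_
  simp only [dotProduct_add, dotProduct_smul, smul_eq_mul]
  rcases (hw k).eq_or_lt with h | h
  · exact Filter.Eventually.of_forall fun t => by rw [hv k h, mul_zero, add_zero, h]
  · exact Filter.Tendsto.eventually_le_const h (Continuous.tendsto' (by fun_prop) 0 _ (by simp))

theorem IsFaceOf.eq_inter_equalitySet [Fintype ι] (hF : IsFaceOf (polyhedron a c) F)
    (hne : F.Nonempty) : F = polyhedron a c ∩ equalitySet a c (tightSet a c F) := by
  refine (Set.subset_inter hF.subset (subset_equalitySet_tightSet F)).antisymm ?_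
  rintro y ⟨hyP, hyT⟩
  obtain ⟨w, hwF, hw⟩ := hF.exists_forall_lt_of_notMem_tightSet hne
  have hv : ∀ k, a k ⬝ᵥ w = c k → a k ⬝ᵥ (w - y) = 0 := fun k hk => by
    have hkT : k ∈ tightSet a c F := by_contra fun h => (hw k h).ne hk
    rw [dotProduct_sub, hk, hyT k hkT, sub_self]
  obtain ⟨t, htP, ht⟩ := ((eventually_add_smul_mem_polyhedron (hF.subset hwF) hv).filter_mono
    nhdsWithin_le_nhds |>.and (self_mem_nhdsWithin (s := Set.Ioi 0))).exists
  obtain ⟨u, rfl⟩ := isFaceOf_iff.1 hF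
  have hmax := hwF.2 _ htP
  rw [dotProduct_add, dotProduct_smul, dotProduct_sub, smul_eq_mul] at hmax
  have hwy : u ⬝ᵥ w ≤ u ⬝ᵥ y := by nlinarith
  exact ⟨hyP, fun z hz => (hwF.2 z hz).trans hwy⟩

theorem exists_add_smul_mem_polyhedron_eq [Fintype ι] {w v : Fin n → ℝ}
    (hw : w ∈ polyhedron a c) (hv : w + v ∉ polyhedron a c) :
    ∃ k, ∃ t : ℝ, 0 ≤ t ∧ t < 1 ∧ c k < a k ⬝ᵥ (w + v) ∧ w + t • v ∈ polyhedron a c ∧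
      a k ⬝ᵥ (w + t • v) = c k := by
  classical
  set B := Finset.univ.filter fun k => c k < a k ⬝ᵥ (w + v)
  have hB : B.Nonempty := by
    obtain ⟨k, hk⟩ : ∃ k, c k < a k ⬝ᵥ (w + v) := by simpa [polyhedron] using hv
    exact ⟨k, Finset.mem_filter.2 ⟨Finset.mem_univ k, hk⟩⟩
  have hpos : ∀ k ∈ B, 0 < a k ⬝ᵥ v := fun k hk => by
    have := (Finset.mem_filter.1 hk).2
    rw [dotProduct_add] at this
    linarith [hw k]
  -- `k₀` is the first constraint met on the way from `w` to `w + v`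
  obtain ⟨k₀, hk₀B, hmin⟩ := B.exists_min_image (fun k => (c k - a k ⬝ᵥ w) / a k ⬝ᵥ v) hB
  have hk₀ := (Finset.mem_filter.1 hk₀B).2
  set t := (c k₀ - a k₀ ⬝ᵥ w) / a k₀ ⬝ᵥ v
  have ht0 : 0 ≤ t := div_nonneg (sub_nonneg.2 (hw k₀)) (hpos k₀ hk₀B).le
  have ht1 : t < 1 := by
    rw [div_lt_one (hpos k₀ hk₀B)]
    rw [dotProduct_add] at hk₀
    linarith
  refine ⟨k₀, t, ht0, ht1, hk₀, fun k => ?_, ?_⟩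
  · rw [dotProduct_add, dotProduct_smul, smul_eq_mul]
    by_cases hk : k ∈ B
    · have := (le_div_iff₀ (hpos k hk)).1 (hmin k hk)
      linarith
    · have hkv : a k ⬝ᵥ (w + v) ≤ c k := by simpa [B] using hk
      rw [dotProduct_add] at hkv
      nlinarith [mul_le_mul_of_nonneg_left (hw k) (sub_nonneg.2 ht1.le),
        mul_le_mul_of_nonneg_left hkv ht0]
  · rw [dotProduct_add, dotProduct_smul, smul_eq_mul, div_mul_cancel₀ _ (hpos k₀ hk₀B).ne']
    ring

theorem isMinimalFaceOf_equalitySet [Fintype ι] {W : Set ι} (hne : (equalitySet a c W).Nonempty)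
    (hsub : equalitySet a c W ⊆ polyhedron a c) :
    IsMinimalFaceOf (polyhedron a c) (equalitySet a c W) := by
  obtain ⟨x₀, hx₀⟩ := hne
  have hface := isFaceOf_inter_equalitySet ⟨hsub hx₀, hx₀⟩
  rw [Set.inter_eq_right.2 hsub] at hface
  refine ⟨hface, ⟨x₀, hx₀⟩, fun G hG ⟨g, hgG⟩ hGsub => hGsub.antisymm fun y hy => ?_⟩
  obtain ⟨u, rfl⟩ := isFaceOf_iff.1 hG
  -- the reflection `g - (y - g)` of `y` in `g` is still feasible
  have hrefl := hgG.2 _ (hsub (add_smul_sub_mem_equalitySet (hGsub hgG) hy (-1)))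
  rw [dotProduct_add, dotProduct_smul, dotProduct_sub, smul_eq_mul] at hrefl
  exact ⟨hsub hy, fun z hz => (hgG.2 z hz).trans (by linarith)⟩

theorem IsMinimalFaceOf.eq_equalitySet [Fintype ι] (hF : IsMinimalFaceOf (polyhedron a c) F) :
    F = equalitySet a c (tightSet a c F) := by
  obtain ⟨hface, ⟨w, hwF⟩, hmin⟩ := hF
  have hFeq := hface.eq_inter_equalitySet ⟨w, hwF⟩
  set T := tightSet a c F
  refine (subset_equalitySet_tightSet F).antisymm fun z hz => ?_
  suffices hzP : z ∈ polyhedron a c by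
    rw [hFeq]
    exact ⟨hzP, hz⟩
  by_contra hzP
  obtain ⟨k, t, -, -, hkz, hyP, hyk⟩ :=
    exists_add_smul_mem_polyhedron_eq (v := z - w) (hface.subset hwF) (by rwa [add_sub_cancel])
  rw [add_sub_cancel] at hkz
  have hyT := add_smul_sub_mem_equalitySet (subset_equalitySet_tightSet F hwF) hz t
  set G := polyhedron a c ∩ equalitySet a c (insert k T)
  have hyG : w + t • (z - w) ∈ G := ⟨hyP, fun l hl => by
    rcases hl with rfl | hl
    exacts [hyk, hyT l hl]⟩
  have hGF : G ⊆ F := by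
    rw [hFeq]
    exact fun x hx => ⟨hx.1, fun l hl => hx.2 l (Set.mem_insert_of_mem k hl)⟩
  have hGeq := hmin G (isFaceOf_inter_equalitySet hyG) ⟨_, hyG⟩ hGF
  have hkT : k ∈ T := fun x hx => (hGeq ▸ hx : x ∈ G).2 k (Set.mem_insert k T)
  exact hkz.ne' (hz k hkT)

theorem IsMinimalFaceOf.spansAllRows [Fintype ι] (hF : IsMinimalFaceOf (polyhedron a c) F) :
    SpansAllRows a (tightSet a c F) := by
  intro e he k
  obtain ⟨x, hx⟩ := hF.2.1
  -- the whole line through `x` in direction `e` lies in `F`, so `a k` is bounded on it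
  have hline : ∀ t : ℝ, a k ⬝ᵥ x + t * a k ⬝ᵥ e ≤ c k := fun t => by
    have hxt : x + t • e ∈ F := by
      rw [hF.eq_equalitySet]
      intro l hl
      rw [dotProduct_add, dotProduct_smul, he l hl, smul_zero, add_zero]
      exact hl x hx
    simpa only [dotProduct_add, dotProduct_smul, smul_eq_mul] using hF.1.subset hxt k
  by_contra h
  have := hline ((c k - a k ⬝ᵥ x + 1) / a k ⬝ᵥ e)
  rw [div_mul_cancel₀ _ h] at this
  linarith

theorem IsMinimalFaceOf.mem_tightSet_iff [Fintype ι] (hF : IsMinimalFaceOf (polyhedron a c) F)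
    {x : Fin n → ℝ} (hx : x ∈ F) {k : ι} : k ∈ tightSet a c F ↔ a k ⬝ᵥ x = c k := by
  refine ⟨fun hk => hk x hx, fun hk y hy => ?_⟩
  rw [hF.spansAllRows.dotProduct_eq (subset_equalitySet_tightSet F hy)
    (subset_equalitySet_tightSet F hx), hk]

theorem ne_equalitySet_of_not_isFaceOf [Fintype ι] {c' : ι → ℝ} (hle : c' ≤ c)
    (hF : IsMinimalFaceOf (polyhedron a c') F) (hnotface : ¬ IsFaceOf (polyhedron a c) F)
    (W : Set ι) : F ≠ equalitySet a c W := by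
  rintro rfl
  exact hnotface (isMinimalFaceOf_equalitySet hF.2.1 (hF.1.subset.trans (polyhedron_mono hle))).1

theorem subset_of_linearIndependent_representatives {S I J : Set ι} (hIS : I ⊆ S)
    (hI : SpansAllRows a I) (hJ : LinearIndependent ℝ fun j : J => a j)
    (hrep : ∀ s ∈ S, ∃ j ∈ J, (a s = a j ∨ a s = -a j) ∧ (s ∈ I ↔ j ∈ I)) : S ⊆ I := by
  intro s hs
  by_contra hsI
  obtain ⟨j, hjJ, -, hj⟩ := hrep s hs
  refine hJ.notMem_span_image (s := {t : J | (t : ι) ∈ I}) (x := ⟨j, hjJ⟩) (hj.not.1 hsI) ?_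
  rw [Set.image_eq_range]
  refine mem_span_of_forall_dotProduct_eq_zero _ _ fun e he => hI e (fun l hl => ?_) j
  obtain ⟨l', hl'J, hrow, hl'⟩ := hrep l (hIS hl)
  have hl'e : a l' ⬝ᵥ e = 0 := he ⟨⟨l', hl'J⟩, hl'.1 hl⟩
  rcases hrow with h | h <;> simp [h, hl'e]

end Faces

/-- The condition of `NonDegenerate` at the single face `F`, over `ℝ`. -/
def TightRowsIndependent {ι : Type*} {n : ℕ} (a : ι → Fin n → ℝ) (c : ι → ℝ)
    (F : Set (Fin n → ℝ)) : Prop :=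
  ∃ J : Set ι, (∀ s ∈ tightSet a c F, ∃ j ∈ J,
    (a s = a j ∧ c s = c j) ∨ (a s = -a j ∧ c s = -c j)) ∧ LinearIndependent ℝ fun j : J => a j

theorem NonDegenerate.tightRowsIndependent {m n : ℕ} {M : Matrix (Fin m) (Fin n) ℤ}
    {b : Fin m → ℤ} {P F : Set (Fin n → ℝ)} (h : NonDegenerate M b P)
    (hF : IsMinimalFaceOf P F) (hFP : F ≠ P) :
    TightRowsIndependent (M.map (Int.cast : ℤ → ℝ)) (fun k => (b k : ℝ)) F := by
  obtain ⟨J, -, hrep, hJ⟩ := h F hF hFP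
  refine ⟨J, fun s hs => ?_, hJ⟩
  obtain ⟨j, hj, hsj⟩ := hrep s hs
  refine ⟨j, hj, hsj.imp (fun ⟨ha, hb⟩ => ⟨funext fun k => ?_, ?_⟩)
    fun ⟨ha, hb⟩ => ⟨funext fun k => ?_, ?_⟩⟩ <;> simp [*]

theorem dotProduct_notMem_Ioo_of_forall_int {m n : ℕ} (M : Matrix (Fin m) (Fin n) ℤ)
    (b : Fin m → ℤ) (i : Fin m) {z : Fin n → ℝ} (hz : ∀ j, ∃ t : ℤ, z j = t) :
    (M.map (Int.cast : ℤ → ℝ)) i ⬝ᵥ z ∉ Set.Ioo ((b i : ℝ) - 1) (b i) := by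
  choose ζ hζ using hz
  have hint : (M.map (Int.cast : ℤ → ℝ)) i ⬝ᵥ z = ((M i ⬝ᵥ ζ : ℤ) : ℝ) := by
    simp [dotProduct, hζ]
  rw [hint]
  rintro ⟨h1, h2⟩
  have h1' : b i - 1 < M i ⬝ᵥ ζ := by exact_mod_cast h1
  have h2' : M i ⬝ᵥ ζ < b i := by exact_mod_cast h2
  omega

section Mate

variable {ι : Type*} [DecidableEq ι] {n : ℕ} {a : ι → Fin n → ℝ} {c c' : ι → ℝ}
  {i : ι} {F' : Set (Fin n → ℝ)}

theorem mem_tightSet_of_not_isFaceOf [Fintype ι] (hc' : c' = c - Pi.single i 1)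
    (hF' : IsMinimalFaceOf (polyhedron a c') F') (hnotface : ¬ IsFaceOf (polyhedron a c) F') :
    i ∈ tightSet a c' F' := by
  subst hc'
  by_contra hi
  refine ne_equalitySet_of_not_isFaceOf (sub_le_self c (Pi.single_nonneg.2 zero_le_one)) hF'
    hnotface (tightSet a _ F') (hF'.eq_equalitySet.trans (Set.ext fun x => forall₂_congr
      fun k hk => ?_))
  rw [Pi.sub_apply, Pi.single_eq_of_ne (ne_of_mem_of_not_mem hk hi), sub_zero]

theorem exists_dotProduct_eq_one_of_not_isFaceOf [Fintype ι] (hc' : c' = c - Pi.single i 1)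
    (hF' : IsMinimalFaceOf (polyhedron a c') F') (hnotface : ¬ IsFaceOf (polyhedron a c) F') :
    ∃ d, a i ⬝ᵥ d = 1 ∧ ∀ k ∈ tightSet a c' F', k ≠ i → a k ⬝ᵥ d = 0 := by
  subst hc'
  set T := tightSet a (c - Pi.single i 1) F'
  by_contra! hno
  have hi0 : ∀ e, (∀ k ∈ T \ {i}, a k ⬝ᵥ e = 0) → a i ⬝ᵥ e = 0 := fun e he => by
    by_contra h
    obtain ⟨k, hkT, hki, hk⟩ := hno ((a i ⬝ᵥ e)⁻¹ • e)
      (by rw [dotProduct_smul, smul_eq_mul, inv_mul_cancel₀ h])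
    exact hk (by rw [dotProduct_smul, he k ⟨hkT, hki⟩, smul_zero])
  have hcc' : ∀ k ≠ i, (c - Pi.single i 1 : ι → ℝ) k = c k := fun k hk => by
    rw [Pi.sub_apply, Pi.single_eq_of_ne hk, sub_zero]
  obtain ⟨x', hx'⟩ := hF'.2.1
  refine ne_equalitySet_of_not_isFaceOf (sub_le_self c (Pi.single_nonneg.2 zero_le_one)) hF'
    hnotface (T \ {i}) (Set.Subset.antisymm (fun x hx k hk => ?_) fun x hx => ?_)
  · rw [← hcc' k hk.2]
    exact hk.1 x hx
  · rw [hF'.eq_equalitySet]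
    intro k hk
    have hxx' := hi0 (x - x') fun l hl => by
      rw [dotProduct_sub, hx l hl, hl.1 x' hx', hcc' l hl.2, sub_self]
    rcases eq_or_ne k i with rfl | hki
    · rw [dotProduct_sub, sub_eq_zero] at hxx'
      rw [hxx']
      exact hk x' hx'
    · rw [hx k ⟨hk, hki⟩, hcc' k hki]

theorem add_mem_equalitySet_tightSet (hc' : c' = c - Pi.single i 1) {x' d : Fin n → ℝ}
    (hx' : x' ∈ F') (hiI : i ∈ tightSet a c' F')
    (hd : a i ⬝ᵥ d = 1 ∧ ∀ k ∈ tightSet a c' F', k ≠ i → a k ⬝ᵥ d = 0) :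
    x' + d ∈ equalitySet a c (tightSet a c' F') := fun k hk => by
  subst hc'
  rw [dotProduct_add, hk x' hx']
  rcases eq_or_ne k i with rfl | hki
  · rw [hd.1, Pi.sub_apply, Pi.single_eq_same, sub_add_cancel]
  · rw [hd.2 k hk hki, Pi.sub_apply, Pi.single_eq_of_ne hki, sub_zero, add_zero]

theorem exists_isMinimalFaceOf_dotProduct_mem_Ioo [Fintype ι] (hc' : c' = c - Pi.single i 1)
    (hF' : IsMinimalFaceOf (polyhedron a c') F') (hiI : i ∈ tightSet a c' F') {d : Fin n → ℝ}
    (hd : a i ⬝ᵥ d = 1 ∧ ∀ k ∈ tightSet a c' F', k ≠ i → a k ⬝ᵥ d = 0)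
    (hsub : ¬ equalitySet a c (tightSet a c' F') ⊆ polyhedron a c) :
    ∃ G, IsMinimalFaceOf (polyhedron a c) G ∧ ∀ x ∈ G, a i ⬝ᵥ x ∈ Set.Ioo (c i - 1) (c i) := by
  set I := tightSet a c' F'
  have hle : c' ≤ c := hc' ▸ sub_le_self c (Pi.single_nonneg.2 zero_le_one)
  have hci : c' i = c i - 1 := by rw [hc', Pi.sub_apply, Pi.single_eq_same]
  obtain ⟨x', hx'⟩ := hF'.2.1
  have hx'P : x' ∈ polyhedron a c := polyhedron_mono hle (hF'.1.subset hx')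
  have hx'd := add_mem_equalitySet_tightSet hc' hx' hiI hd
  have hI : SpansAllRows a I := hF'.spansAllRows
  obtain ⟨k₀, τ, hτ0, hτ1, hk₀, hx₂P, hx₂k₀⟩ :=
    exists_add_smul_mem_polyhedron_eq hx'P (mt (hI.equalitySet_subset hx'd) hsub)
  have hk₀I : k₀ ∉ I := fun hk => hk₀.ne (hx'd k₀ hk).symm
  have hτpos : 0 < τ := by
    refine hτ0.lt_of_ne fun hτ => hk₀I ((hF'.mem_tightSet_iff hx').2 ?_)
    rw [← hτ, zero_smul, add_zero] at hx₂k₀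
    exact le_antisymm (hF'.1.subset hx' k₀) (hx₂k₀ ▸ hle k₀)
  have hdk₀ : a k₀ ⬝ᵥ d ≠ 0 := by
    rw [dotProduct_add] at hk₀
    exact (by linarith [hx'P k₀] : 0 < a k₀ ⬝ᵥ d).ne'
  set W := insert k₀ (I \ {i})
  have hx₂W : x' + τ • d ∈ equalitySet a c W := by
    rintro k (rfl | ⟨hk, hki⟩)
    · exact hx₂k₀
    · rw [dotProduct_add, dotProduct_smul, hd.2 k hk hki, smul_zero, add_zero, hk x' hx',
        hc', Pi.sub_apply, Pi.single_eq_of_ne hki, sub_zero]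
  have hW : SpansAllRows a W := hI.insert_diff_singleton hd.1 hd.2 hdk₀
  refine ⟨equalitySet a c W, isMinimalFaceOf_equalitySet ⟨_, hx₂W⟩
    (hW.equalitySet_subset hx₂W hx₂P), fun x hx => ?_⟩
  rw [hW.dotProduct_eq hx hx₂W, dotProduct_add, dotProduct_smul, hd.1, hiI x' hx', hci,
    smul_eq_mul, mul_one]
  exact ⟨by linarith, by linarith⟩

theorem equalitySet_tightSet_ne_polyhedron (hc' : c' = c - Pi.single i 1)
    (hF' : IsMinimalFaceOf (polyhedron a c') F') (hiI : i ∈ tightSet a c' F') :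
    equalitySet a c (tightSet a c' F') ≠ polyhedron a c := by
  subst hc'
  intro h
  obtain ⟨x', hx'⟩ := hF'.2.1
  have hx'P := polyhedron_mono (sub_le_self c (Pi.single_nonneg.2 zero_le_one)) (hF'.1.subset hx')
  have := (h ▸ hx'P : x' ∈ equalitySet a c _) i hiI
  rw [hiI x' hx', Pi.sub_apply, Pi.single_eq_same] at this
  linarith

theorem mem_tightSet_iff_of_eq_or_eq_neg [Fintype ι] (hc' : c' = c - Pi.single i 1)
    (hirr : ∃ x, (∀ k, k ≠ i → a k ⬝ᵥ x ≤ c k) ∧ c i < a i ⬝ᵥ x)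
    (hF' : IsMinimalFaceOf (polyhedron a c') F') {s j : ι}
    (h : (a s = a j ∧ c s = c j) ∨ (a s = -a j ∧ c s = -c j)) :
    s ∈ tightSet a c' F' ↔ j ∈ tightSet a c' F' := by
  obtain ⟨x', hx'⟩ := hF'.2.1
  rw [hF'.mem_tightSet_iff hx', hF'.mem_tightSet_iff hx']
  rcases h with ⟨ha, hc⟩ | ⟨ha, hc⟩
  · -- irredundancy forbids duplicating constraint `i`, so lowering `c i` keeps `c' s = c' j`
    have hsi : s = i ↔ j = i := by
      constructor <;> rintro rfl
      · exact eq_of_irredundant hirr ha.symm hc.symm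
      · exact eq_of_irredundant hirr ha hc
    have hcs : c' s = c' j := by
      simp only [hc', Pi.sub_apply, Pi.single_apply, hsi, hc]
    rw [ha, hcs]
  · -- `0 = a s ⬝ᵥ x' + a j ⬝ᵥ x' ≤ c' s + c' j ≤ c s + c j = 0`, so both are tight
    have hle : c' ≤ c := hc' ▸ sub_le_self c (Pi.single_nonneg.2 zero_le_one)
    have hneg : a s ⬝ᵥ x' = -(a j ⬝ᵥ x') := by rw [ha, neg_dotProduct]
    have hs := hF'.1.subset hx' s
    have hj := hF'.1.subset hx' j
    constructor <;> intro <;> linarith [hle s, hle j]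

theorem tightSet_equalitySet_tightSet_eq [Fintype ι] (hc' : c' = c - Pi.single i 1)
    (hirr : ∃ x, (∀ k, k ≠ i → a k ⬝ᵥ x ≤ c k) ∧ c i < a i ⬝ᵥ x)
    (hF' : IsMinimalFaceOf (polyhedron a c') F')
    (hind : TightRowsIndependent a c (equalitySet a c (tightSet a c' F'))) :
    tightSet a c (equalitySet a c (tightSet a c' F')) = tightSet a c' F' := by
  obtain ⟨J, hrep, hJ⟩ := hind
  refine (subset_of_linearIndependent_representatives (subset_tightSet_equalitySet _)
    hF'.spansAllRows hJ fun s hs => ?_).antisymm (subset_tightSet_equalitySet _)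
  obtain ⟨j, hj, hsj⟩ := hrep s hs
  exact ⟨j, hj, hsj.imp And.left And.left, mem_tightSet_iff_of_eq_or_eq_neg hc' hirr hF' hsj⟩

end Mate

theorem minimal_face_mate_general {m n : ℕ} (M : Matrix (Fin m) (Fin n) ℤ)
    (b b' : Fin m → ℤ) (i : Fin m)
    (hb' : b' = fun k => b k - (if k = i then 1 else 0))
    (P P' : Set (Fin n → ℝ))
    (hP : P = {x | ∀ k, ∑ j, (M k j : ℝ) * x j ≤ (b k : ℝ)})
    (hP' : P' = {x | ∀ k, ∑ j, (M k j : ℝ) * x j ≤ (b' k : ℝ)})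
    (hPint : IsIntegralPoly P)
    (hirr : ∃ x : Fin n → ℝ, (∀ k, k ≠ i → ∑ j, (M k j : ℝ) * x j ≤ (b k : ℝ)) ∧
      (b i : ℝ) < ∑ j, (M i j : ℝ) * x j)
    (hnondeg : NonDegenerate M b P)
    (F' : Set (Fin n → ℝ)) (hF' : IsMinimalFaceOf P' F')
    (hnotface : ¬ IsFaceOf P F') :
    ∃ F, IsMinimalFaceOf P F ∧ TightIdx M b F = TightIdx M b' F' := by
  set a : Fin m → Fin n → ℝ := M.map (Int.cast : ℤ → ℝ)
  set c : Fin m → ℝ := fun k => (b k : ℝ)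
  set c' : Fin m → ℝ := fun k => (b' k : ℝ)
  have hc' : c' = c - Pi.single i 1 := by
    funext k
    simp [hb', c, c', Pi.single_apply]
  replace hP : P = polyhedron a c := hP
  replace hP' : P' = polyhedron a c' := hP'
  subst hP hP'
  have hiI := mem_tightSet_of_not_isFaceOf hc' hF' hnotface
  obtain ⟨d, hd⟩ := exists_dotProduct_eq_one_of_not_isFaceOf hc' hF' hnotface
  obtain ⟨x', hx'⟩ := hF'.2.1
  have hsub : equalitySet a c (tightSet a c' F') ⊆ polyhedron a c := by
    by_contra h
    obtain ⟨G, hG, hGi⟩ := exists_isMinimalFaceOf_dotProduct_mem_Ioo hc' hF' hiI hd h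
    obtain ⟨z, hzG, hz⟩ := hPint G hG
    exact dotProduct_notMem_Ioo_of_forall_int M b i hz (hGi z hzG)
  have hE := isMinimalFaceOf_equalitySet ⟨_, add_mem_equalitySet_tightSet hc' hx' hiI hd⟩ hsub
  exact ⟨_, hE, tightSet_equalitySet_tightSet_eq hc' hirr hF'
    (hnondeg.tightRowsIndependent hE (equalitySet_tightSet_ne_polyhedron hc' hF' hiI))⟩

/-- Mates of minimal faces after decreasing one right-hand side by one: if `P` is a
nonempty integral polyhedron, constraint `i` is irredundant, and `Mx ≤ b` is
non-degenerate, then every minimal nonempty face of `P' = {x : Mx ≤ b − eⁱ}` that is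
not a face of `P` has a mate among the minimal nonempty faces of `P`. -/
theorem minimal_face_mate {m n : ℕ} (M : Matrix (Fin m) (Fin n) ℤ)
    (b b' : Fin m → ℤ) (i : Fin m)
    (hb' : b' = fun k => b k - (if k = i then 1 else 0))
    (P P' : Set (Fin n → ℝ))
    (hP : P = {x | ∀ k, ∑ j, (M k j : ℝ) * x j ≤ (b k : ℝ)})
    (hP' : P' = {x | ∀ k, ∑ j, (M k j : ℝ) * x j ≤ (b' k : ℝ)})
    (hPne : P.Nonempty)
    (hPint : IsIntegralPoly P)
    (hirr : ∃ x : Fin n → ℝ, (∀ k, k ≠ i → ∑ j, (M k j : ℝ) * x j ≤ (b k : ℝ)) ∧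
      (b i : ℝ) < ∑ j, (M i j : ℝ) * x j)
    (hnondeg : NonDegenerate M b P)
    (F' : Set (Fin n → ℝ)) (hF' : IsMinimalFaceOf P' F')
    (hnotface : ¬ IsFaceOf P F') :
    ∃ F, IsMinimalFaceOf P F ∧ TightIdx M b F = TightIdx M b' F' :=
  minimal_face_mate_general M b b' i hb' P P' hP hP' hPint hirr hnondeg F' hF' hnotface
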